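/- arXiv:1305.0047 — 3 statements merged into one kernel-verified Lean document; each statement's English description precedes it below -/
import Mathlib

section
/- Let P ∈ ℝ^{n×k}, Q ∈ ℝ^{n×q}, and Z ∈ ℝ^{q×t} be matrices and l₃ ≥ 1 an integer. Then sup{‖PᵀQv‖/‖v‖ : v ∈ 𝓗(Z,l₃), v ≠ 0} ≤ (1/2)·(ρ⁺_{[P Q],Z}(k,l₃) − ρ⁻_{[P Q],Z}(k,l₃)), where [P Q] ∈ ℝ^{n×(k+q)} is the column concatenation of P and Q. -/
open scoped BigOperators
open Matrix MeasureTheory ProbabilityTheory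

/-- Euclidean norm of a vector in `ℝ^n`. -/
noncomputable def vnorm {n : ℕ} (v : Fin n → ℝ) : ℝ := Real.sqrt (∑ i, v i ^ 2)

/-- ℓ¹ norm. -/
noncomputable def vnorm1 {n : ℕ} (v : Fin n → ℝ) : ℝ := ∑ i, |v i|

/-- ℓ∞ norm. -/
noncomputable def vnormInf {n : ℕ} (v : Fin n → ℝ) : ℝ := ⨆ i, |v i|

/-- Restriction of a vector to an index set: coordinates outside `T` are set to zero. -/
noncomputable def restr {m : ℕ} (T : Finset (Fin m)) (w : Fin m → ℝ) : Fin m → ℝ :=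
  fun i => if i ∈ T then w i else 0

/-- Support of a vector. -/
noncomputable def suppSet {m : ℕ} (w : Fin m → ℝ) : Finset (Fin m) :=
  Finset.univ.filter (fun i => w i ≠ 0)

/-- `𝓗(Y, k)`: all vectors `Y v` with `v` having at most `k` nonzero coordinates. -/
noncomputable def sparseCone {q t : ℕ} (Y : Matrix (Fin q) (Fin t) ℝ) (k : ℕ) :
    Set (Fin q → ℝ) :=
  {w | ∃ v : Fin t → ℝ, (Finset.univ.filter fun i => v i ≠ 0).card ≤ k ∧ w = Y.mulVec v}

/-- `ρ⁺_{Ψ,Y}(k)` (the `l₁ = 0` version). -/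
noncomputable def rhoPlus0 {n q t : ℕ} (Ψ : Matrix (Fin n) (Fin q) ℝ)
    (Y : Matrix (Fin q) (Fin t) ℝ) (k : ℕ) : ℝ :=
  sSup {x | ∃ w ∈ sparseCone Y k, w ≠ 0 ∧ x = vnorm (Ψ.mulVec w) ^ 2 / vnorm w ^ 2}

/-- `ρ⁻_{Ψ,Y}(k)` (the `l₁ = 0` version). -/
noncomputable def rhoMinus0 {n q t : ℕ} (Ψ : Matrix (Fin n) (Fin q) ℝ)
    (Y : Matrix (Fin q) (Fin t) ℝ) (k : ℕ) : ℝ :=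
  sInf {x | ∃ w ∈ sparseCone Y k, w ≠ 0 ∧ x = vnorm (Ψ.mulVec w) ^ 2 / vnorm w ^ 2}

/-- `ρ⁺_{Ψ,Y}(l₁, k)`. -/
noncomputable def rhoPlus {n l₁ q t : ℕ} (Ψ : Matrix (Fin n) (Fin (l₁ + q)) ℝ)
    (Y : Matrix (Fin q) (Fin t) ℝ) (k : ℕ) : ℝ :=
  sSup {x | ∃ (u : Fin l₁ → ℝ) (w : Fin q → ℝ), w ∈ sparseCone Y k ∧ Fin.append u w ≠ 0 ∧
    x = vnorm (Ψ.mulVec (Fin.append u w)) ^ 2 / vnorm (Fin.append u w) ^ 2}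

/-- `ρ⁻_{Ψ,Y}(l₁, k)`. -/
noncomputable def rhoMinus {n l₁ q t : ℕ} (Ψ : Matrix (Fin n) (Fin (l₁ + q)) ℝ)
    (Y : Matrix (Fin q) (Fin t) ℝ) (k : ℕ) : ℝ :=
  sInf {x | ∃ (u : Fin l₁ → ℝ) (w : Fin q → ℝ), w ∈ sparseCone Y k ∧ Fin.append u w ≠ 0 ∧
    x = vnorm (Ψ.mulVec (Fin.append u w)) ^ 2 / vnorm (Fin.append u w) ^ 2}

/-- Column concatenation `[P Q]`. -/
def hcat {n a b : ℕ} (P : Matrix (Fin n) (Fin a) ℝ) (Q : Matrix (Fin n) (Fin b) ℝ) :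
    Matrix (Fin n) (Fin (a + b)) ℝ :=
  Matrix.of fun i => Fin.append (P i) (Q i)

/-- Smallest singular value: `min_{‖v‖ = 1} ‖Z v‖`. -/
noncomputable def sigmaMin {m r : ℕ} (Z : Matrix (Fin m) (Fin r) ℝ) : ℝ :=
  sInf {x | ∃ v : Fin r → ℝ, vnorm v = 1 ∧ x = vnorm (Z.mulVec v)}

/-- Largest singular value: `max_{‖v‖ = 1} ‖Z v‖`. -/
noncomputable def sigmaMax {m r : ℕ} (Z : Matrix (Fin m) (Fin r) ℝ) : ℝ :=
  sSup {x | ∃ v : Fin r → ℝ, vnorm v = 1 ∧ x = vnorm (Z.mulVec v)}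

lemma vnorm_sq {n : ℕ} (v : Fin n → ℝ) : vnorm v ^ 2 = ∑ i, v i ^ 2 :=
  Real.sq_sqrt (Finset.sum_nonneg fun i _ => sq_nonneg _)

lemma vnorm_nonneg' {n : ℕ} (v : Fin n → ℝ) : 0 ≤ vnorm v := Real.sqrt_nonneg _

lemma vnorm_pos {n : ℕ} {v : Fin n → ℝ} (h : v ≠ 0) : 0 < vnorm v := by
  rw [vnorm]
  apply Real.sqrt_pos.2
  obtain ⟨i, hi⟩ : ∃ i, v i ≠ 0 := by
    by_contra h'; push_neg at h'; exact h (funext h')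
  exact Finset.sum_pos' (fun j _ => sq_nonneg _) ⟨i, Finset.mem_univ i, by positivity⟩

lemma mulVec_hcat {n a b : ℕ} (P : Matrix (Fin n) (Fin a) ℝ) (Q : Matrix (Fin n) (Fin b) ℝ)
    (u : Fin a → ℝ) (w : Fin b → ℝ) :
    (hcat P Q).mulVec (Fin.append u w) = P.mulVec u + Q.mulVec w := by
  funext i
  simp [hcat, Matrix.mulVec, dotProduct, Fin.sum_univ_add]

lemma vnorm_append_sq {a b : ℕ} (u : Fin a → ℝ) (w : Fin b → ℝ) :
    vnorm (Fin.append u w) ^ 2 = vnorm u ^ 2 + vnorm w ^ 2 := by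
  rw [vnorm_sq, vnorm_sq, vnorm_sq, Fin.sum_univ_add]
  simp

lemma ratio_bound {n m : ℕ} (Ψ : Matrix (Fin n) (Fin m) ℝ) (h : Fin m → ℝ) (hh : h ≠ 0) :
    vnorm (Ψ.mulVec h) ^ 2 / vnorm h ^ 2 ≤ ∑ i, ∑ j, Ψ i j ^ 2 := by
  have hD : 0 < vnorm h ^ 2 := pow_pos (vnorm_pos hh) 2
  rw [div_le_iff₀ hD, vnorm_sq, vnorm_sq]
  calc ∑ i, (Ψ.mulVec h) i ^ 2
      ≤ ∑ i, ((∑ j, Ψ i j ^ 2) * ∑ j, h j ^ 2) := by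
        refine Finset.sum_le_sum fun i _ => ?_
        simpa [Matrix.mulVec, dotProduct] using
          Finset.sum_mul_sq_le_sq_mul_sq Finset.univ (Ψ i) h
    _ = (∑ i, ∑ j, Ψ i j ^ 2) * ∑ j, h j ^ 2 := by rw [Finset.sum_mul]

lemma append_ne_zero_of_right {a b : ℕ} (u : Fin a → ℝ) {w : Fin b → ℝ} (hw : w ≠ 0) :
    Fin.append u w ≠ 0 := by
  intro h
  apply hw
  funext j
  have := congrFun h (Fin.natAdd a j)
  rwa [Fin.append_right] at this

/-- For matrices `P ∈ ℝ^{n×k}`, `Q ∈ ℝ^{n×q}`, `Z ∈ ℝ^{q×t}` and `l₃ ≥ 1`,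
`sup {‖PᵀQv‖/‖v‖ : v ∈ 𝓗(Z,l₃), v ≠ 0} ≤ (1/2)(ρ⁺_{[P Q],Z}(k,l₃) − ρ⁻_{[P Q],Z}(k,l₃))`. -/
theorem statement0 {n k q t : ℕ} (P : Matrix (Fin n) (Fin k) ℝ)
    (Q : Matrix (Fin n) (Fin q) ℝ) (Z : Matrix (Fin q) (Fin t) ℝ)
    (l₃ : ℕ) (hl₃ : 1 ≤ l₃) :
    sSup {x : ℝ | ∃ v ∈ sparseCone Z l₃, v ≠ 0 ∧
        x = vnorm (Pᵀ.mulVec (Q.mulVec v)) / vnorm v} ≤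
      (1 / 2) * (rhoPlus (hcat P Q) Z l₃ - rhoMinus (hcat P Q) Z l₃) := by
  
  set Ψ := hcat P Q with hPsi
  set RS : Set ℝ := {x | ∃ (u : Fin k → ℝ) (w : Fin q → ℝ), w ∈ sparseCone Z l₃ ∧ Fin.append u w ≠ 0 ∧
    x = vnorm (Ψ.mulVec (Fin.append u w)) ^ 2 / vnorm (Fin.append u w) ^ 2} with hRSdef
  have hplus : rhoPlus Ψ Z l₃ = sSup RS := rfl
  have hminus : rhoMinus Ψ Z l₃ = sInf RS := rfl
  have hbddA : BddAbove RS := ⟨∑ i, ∑ j, Ψ i j ^ 2, by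
    rintro x ⟨u, w, hw, hne, rfl⟩; exact ratio_bound Ψ _ hne⟩
  have hbddB : BddBelow RS := ⟨0, by
    rintro x ⟨u, w, hw, hne, rfl⟩
    have := vnorm_pos hne
    positivity⟩
  have hdiff : 0 ≤ rhoPlus Ψ Z l₃ - rhoMinus Ψ Z l₃ := by
    rcases Set.eq_empty_or_nonempty RS with he | ⟨x, hx⟩
    · rw [hplus, hminus, he, Real.sSup_empty, Real.sInf_empty]; norm_num
    · rw [hplus, hminus]
      have h1 := csInf_le hbddB hx
      have h2 := le_csSup hbddA hx
      linarith
  rw [hplus, hminus]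
  apply Real.sSup_le _ (by rw [hplus, hminus] at hdiff; linarith)
  rintro x ⟨v, hv, hv0, rfl⟩
  set g := Pᵀ.mulVec (Q.mulVec v) with hg
  set s := vnorm v with hs
  set c := vnorm g with hc
  have hspos : 0 < s := vnorm_pos hv0
  set u : Fin k → ℝ := (s / c) • g with hu
  have hmemP : vnorm (Ψ.mulVec (Fin.append u v)) ^ 2 / vnorm (Fin.append u v) ^ 2 ∈ RS :=
    ⟨u, v, hv, append_ne_zero_of_right u hv0, rfl⟩
  have hmemM : vnorm (Ψ.mulVec (Fin.append (-u) v)) ^ 2 / vnorm (Fin.append (-u) v) ^ 2 ∈ RS :=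
    ⟨-u, v, hv, append_ne_zero_of_right (-u) hv0, rfl⟩
  have hP1 := le_csSup hbddA hmemP
  have hM1 := csInf_le hbddB hmemM
  have hdu : vnorm (Fin.append u v) ^ 2 = vnorm u ^ 2 + s ^ 2 := vnorm_append_sq u v
  have hnegu : vnorm (-u) ^ 2 = vnorm u ^ 2 := by rw [vnorm_sq, vnorm_sq]; simp
  have hdnu : vnorm (Fin.append (-u) v) ^ 2 = vnorm u ^ 2 + s ^ 2 := by
    rw [vnorm_append_sq, hnegu]
  have key : P.mulVec u ⬝ᵥ Q.mulVec v = u ⬝ᵥ g := by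
    rw [hg, Matrix.mulVec_transpose, dotProduct_comm u, ← Matrix.dotProduct_mulVec,
      dotProduct_comm]
  have hpol : vnorm (Ψ.mulVec (Fin.append u v)) ^ 2 - vnorm (Ψ.mulVec (Fin.append (-u) v)) ^ 2
      = 4 * (u ⬝ᵥ g) := by
    rw [hPsi, mulVec_hcat, mulVec_hcat, vnorm_sq, vnorm_sq, ← Finset.sum_sub_distrib, ← key]
    have hterm : ∀ i : Fin n, (P.mulVec u + Q.mulVec v) i ^ 2 - (P.mulVec (-u) + Q.mulVec v) i ^ 2
        = 4 * (P.mulVec u i * Q.mulVec v i) := by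
      intro i
      have hneg : P.mulVec (-u) i = - P.mulVec u i := by rw [Matrix.mulVec_neg]; rfl
      simp only [Pi.add_apply, hneg]
      ring
    rw [Finset.sum_congr rfl (fun i _ => hterm i), ← Finset.mul_sum]
    rfl
  have hgg : g ⬝ᵥ g = c ^ 2 := by
    rw [hc, vnorm_sq, dotProduct]
    exact Finset.sum_congr rfl fun i _ => (sq (g i)).symm
  have hug : u ⬝ᵥ g = (s / c) * c ^ 2 := by
    rw [hu, smul_dotProduct, hgg, smul_eq_mul]
  have hnu : vnorm u ^ 2 = (s / c) ^ 2 * c ^ 2 := by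
    rw [hu, vnorm_sq]
    have : ∀ i, ((s / c) • g) i ^ 2 = (s / c) ^ 2 * g i ^ 2 := by
      intro i; simp [mul_pow]
    rw [Finset.sum_congr rfl (fun i _ => this i), ← Finset.mul_sum]
    congr 1
    rw [← vnorm_sq, ← hc]
  rcases eq_or_lt_of_le (vnorm_nonneg' g) with hc0 | hc0
  · -- c = 0 case
    rw [hc, ← hc0, zero_div]
    rw [hplus, hminus] at hdiff
    linarith
  · have hcne : c ≠ 0 := ne_of_gt hc0
    have hug' : u ⬝ᵥ g = s * c := by rw [hug]; field_simp
    have hnu' : vnorm u ^ 2 = s ^ 2 := by rw [hnu]; field_simp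
    rw [hdu, hnu'] at hP1
    rw [hdnu, hnu'] at hM1
    rw [hug'] at hpol
    have hsne : s ≠ 0 := ne_of_gt hspos
    have heq : vnorm (Ψ.mulVec (Fin.append u v)) ^ 2 / (s ^ 2 + s ^ 2)
        - vnorm (Ψ.mulVec (Fin.append (-u) v)) ^ 2 / (s ^ 2 + s ^ 2) = 2 * (c / s) := by
      rw [div_sub_div_same, hpol]
      field_simp
      ring
    linarith
end

section
/- In the simplified dictionary-LASSO setting, 3‖(Zh)_{T₀}‖₁ ≥ ‖(Zh)_{T₀ᶜ}‖₁, where ‖·‖₁ is the ℓ₁ norm and T₀ᶜ = {1,…,m} \ T₀. -/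
open scoped BigOperators
open Matrix MeasureTheory ProbabilityTheory

/-- In the simplified dictionary-LASSO setting,
`3‖(Zh)_{T₀}‖₁ ≥ ‖(Zh)_{T₀ᶜ}‖₁`. -/
theorem statement1 {n r m : ℕ} (hn : 0 < n) (hr : 0 < r) (hm : 0 < m)
    (X : Matrix (Fin n) (Fin r) ℝ) (Z : Matrix (Fin m) (Fin r) ℝ)
    (hZrank : Z.rank = r)
    (Zp : Matrix (Fin r) (Fin m) ℝ) (hZp : Zp = (Zᵀ * Z)⁻¹ * Zᵀ)
    (y : Fin n → ℝ) (lam : ℝ) (hlam : 0 < lam)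
    (βstar βhat : Fin r → ℝ)
    (hmin : ∀ β : Fin r → ℝ,
      (1 / 2) * vnorm (X.mulVec βhat - y) ^ 2 + lam * vnorm1 (Z.mulVec βhat) ≤
        (1 / 2) * vnorm (X.mulVec β - y) ^ 2 + lam * vnorm1 (Z.mulVec β))
    (h : Fin r → ℝ) (hh : h = βhat - βstar)
    (T₀ : Finset (Fin m)) (hT₀ : T₀ = suppSet (Z.mulVec βstar))
    (hfeas : vnormInf (Zpᵀ.mulVec (Xᵀ.mulVec (X.mulVec βstar - y))) < lam / 2) :
    vnorm1 (restr T₀ᶜ (Z.mulVec h)) ≤ 3 * vnorm1 (restr T₀ (Z.mulVec h)) := by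
  classical
  -- notation
  set g : Fin n → ℝ := X.mulVec βstar - y with hgdef
  set u : Fin m → ℝ := Z.mulVec h with hudef
  set a : Fin m → ℝ := Z.mulVec βstar with hadef
  set b : Fin m → ℝ := Zpᵀ.mulVec (Xᵀ.mulVec g) with hbdef
  -- Zp * Z = 1
  have hZtZrank : (Zᵀ * Z).rank = Fintype.card (Fin r) := by
    rw [Matrix.rank_transpose_mul_self, hZrank, Fintype.card_fin]
  have hUnit : IsUnit (Zᵀ * Z).det := by
    rw [← Matrix.isUnit_iff_isUnit_det, ← Matrix.mulVec_surjective_iff_isUnit]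
    have : LinearMap.range (Zᵀ * Z).mulVecLin = ⊤ := by
      apply Submodule.eq_top_of_finrank_eq
      rw [show Module.finrank ℝ ↥(LinearMap.range (Zᵀ * Z).mulVecLin) = (Zᵀ * Z).rank from rfl,
        hZtZrank]
      simp [Module.finrank_fintype_fun_eq_card]
    intro v
    obtain ⟨w, hw⟩ := (LinearMap.range_eq_top.mp this) v
    exact ⟨w, hw⟩
  have hZpZ : Zp * Z = 1 := by
    rw [hZp, Matrix.mul_assoc, Matrix.nonsing_inv_mul _ hUnit]
  -- h recovered from u
  have hhu : Zp.mulVec u = h := by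
    rw [hudef, Matrix.mulVec_mulVec, hZpZ, Matrix.one_mulVec]
  -- square of vnorm
  have sqv : ∀ {k : ℕ} (v : Fin k → ℝ), vnorm v ^ 2 = ∑ i, v i ^ 2 := by
    intro k v
    exact Real.sq_sqrt (Finset.sum_nonneg fun i _ => sq_nonneg _)
  -- the key dot product identity
  have hdot : (∑ i, X.mulVec h i * g i) = ∑ i, b i * u i := by
    have h1 : (∑ i, X.mulVec h i * g i) = g ⬝ᵥ X.mulVec h := by
      simp [dotProduct, mul_comm]
    have h2 : g ⬝ᵥ X.mulVec h = (Xᵀ.mulVec g) ⬝ᵥ h := by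
      rw [Matrix.dotProduct_mulVec, Matrix.mulVec_transpose]
    have h3 : (Xᵀ.mulVec g) ⬝ᵥ h = b ⬝ᵥ u := by
      rw [← hhu, Matrix.dotProduct_mulVec, hbdef]
      simp [Matrix.mulVec_transpose]
    rw [h1, h2, h3]; rfl
  -- vnorm1 over a Finset
  have v1restr : ∀ (T : Finset (Fin m)) (w : Fin m → ℝ),
      vnorm1 (restr T w) = ∑ i ∈ T, |w i| := by
    intro T w
    unfold vnorm1 restr
    rw [← Finset.sum_filter_add_sum_filter_not Finset.univ (fun i => i ∈ T)]
    have : (∑ i ∈ Finset.univ.filter (fun i => ¬ i ∈ T),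
        |if i ∈ T then w i else 0|) = 0 := by
      apply Finset.sum_eq_zero; intro i hi
      simp only [Finset.mem_filter] at hi
      simp [hi.2]
    rw [this, add_zero]
    rw [Finset.filter_mem_eq_inter, Finset.univ_inter]
    apply Finset.sum_congr rfl
    intro i hi; simp [hi]
  set S : ℝ := vnorm1 (restr T₀ u) with hS
  set Sc : ℝ := vnorm1 (restr T₀ᶜ u) with hSc
  have hSsum : vnorm1 u = S + Sc := by
    rw [hS, hSc, v1restr, v1restr]
    exact (Finset.sum_add_sum_compl T₀ _).symm
  -- bound on |b i|
  have hbbd : ∀ i, |b i| ≤ lam / 2 := by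
    intro i
    have : |b i| ≤ vnormInf b := by
      apply le_ciSup (f := fun i => |b i|)
      exact Set.Finite.bddAbove (Set.finite_range _)
    linarith [hfeas]
  -- bound the cross term
  have hcross : |∑ i, b i * u i| ≤ lam / 2 * (S + Sc) := by
    calc |∑ i, b i * u i| ≤ ∑ i, |b i * u i| := Finset.abs_sum_le_sum_abs _ _
      _ ≤ ∑ i, lam / 2 * |u i| := by
          apply Finset.sum_le_sum; intro i _
          rw [abs_mul]
          exact mul_le_mul_of_nonneg_right (hbbd i) (abs_nonneg _)
      _ = lam / 2 * vnorm1 u := by rw [vnorm1, Finset.mul_sum]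
      _ = lam / 2 * (S + Sc) := by rw [hSsum]
  -- a vanishes outside T₀
  have haT : ∀ i, i ∉ T₀ → a i = 0 := by
    intro i hi
    rw [hT₀] at hi
    simpa [suppSet] using hi
  -- lower bound on vnorm1 (a + u)
  have hZβhat : Z.mulVec βhat = a + u := by
    rw [hadef, hudef, hh, ← Matrix.mulVec_add]
    congr 1; ext j; simp
  have hlower : vnorm1 a - S + Sc ≤ vnorm1 (a + u) := by
    have e1 : vnorm1 (a + u) = ∑ i ∈ T₀, |a i + u i| + ∑ i ∈ T₀ᶜ, |u i| := by
      rw [vnorm1, ← Finset.sum_add_sum_compl T₀]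
      congr 1
      apply Finset.sum_congr rfl; intro i hi
      rw [Pi.add_apply, haT i (Finset.mem_compl.mp hi)]; simp
    have e2 : vnorm1 a = ∑ i ∈ T₀, |a i| := by
      rw [vnorm1, ← Finset.sum_add_sum_compl T₀]
      have : (∑ i ∈ T₀ᶜ, |a i|) = 0 := by
        apply Finset.sum_eq_zero; intro i hi
        rw [haT i (Finset.mem_compl.mp hi)]; simp
      rw [this, add_zero]
    have e3 : ∑ i ∈ T₀, |a i| - ∑ i ∈ T₀, |u i| ≤ ∑ i ∈ T₀, |a i + u i| := by
      rw [← Finset.sum_sub_distrib]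
      apply Finset.sum_le_sum; intro i _
      have := abs_sub_abs_le_abs_sub (a i) (-(u i))
      rw [abs_neg, sub_neg_eq_add] at this
      linarith
    rw [e1, e2, hS, hSc, v1restr, v1restr]
    linarith [e3]
  -- expand the minimality inequality at βstar
  have hexp : vnorm (X.mulVec βhat - y) ^ 2 =
      vnorm (X.mulVec h) ^ 2 + 2 * (∑ i, b i * u i) + vnorm g ^ 2 := by
    have hbh : X.mulVec βhat - y = X.mulVec h + g := by
      rw [hgdef, hh, Matrix.mulVec_sub]
      ext j
      simp only [Pi.add_apply, Pi.sub_apply]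
      ring
    rw [hbh, ← hdot, sqv, sqv (X.mulVec h), sqv g, Finset.mul_sum,
      ← Finset.sum_add_distrib, ← Finset.sum_add_distrib]
    apply Finset.sum_congr rfl; intro i _
    simp only [Pi.add_apply]; ring
  have hm1 := hmin βstar
  rw [hexp, hZβhat, ← hgdef] at hm1
  -- combine
  have hXh2 : 0 ≤ vnorm (X.mulVec h) ^ 2 := sq_nonneg _
  have habs : -(lam / 2 * (S + Sc)) ≤ ∑ i, b i * u i := by
    linarith [neg_abs_le (∑ i, b i * u i), hcross]
  have hfinal : lam * (vnorm1 a - S + Sc) ≤ lam * vnorm1 a + lam / 2 * (S + Sc) := by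
    have h1 : lam * vnorm1 (a + u) ≤ lam * vnorm1 a + lam / 2 * (S + Sc) := by
      linarith [hm1, hXh2, habs]
    calc lam * (vnorm1 a - S + Sc) ≤ lam * vnorm1 (a + u) := by
          apply mul_le_mul_of_nonneg_left hlower hlam.le
      _ ≤ lam * vnorm1 a + lam / 2 * (S + Sc) := h1
  nlinarith [hfinal, hlam]
end

section
/- In the simplified dictionary-LASSO setting with the block partition, one has ‖Xh‖² ≤ 6·√s·λ·‖(Zh)_{T₀₁}‖, where T₀₁ = T₀ ∪ T₁. -/
open scoped BigOperators
open Matrix MeasureTheory ProbabilityTheory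

set_option maxHeartbeats 2000000 in
/-- In the simplified dictionary-LASSO setting with the block partition,
`‖Xh‖² ≤ 6·√s·λ·‖(Zh)_{T₀₁}‖` where `T₀₁ = T₀ ∪ T₁`. -/
theorem statement4 {n r m : ℕ} (hn : 0 < n) (hr : 0 < r) (hm : 0 < m)
    (X : Matrix (Fin n) (Fin r) ℝ) (Z : Matrix (Fin m) (Fin r) ℝ)
    (hZrank : Z.rank = r)
    (Zp : Matrix (Fin r) (Fin m) ℝ) (hZp : Zp = (Zᵀ * Z)⁻¹ * Zᵀ)
    (y : Fin n → ℝ) (lam : ℝ) (hlam : 0 < lam)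
    (βstar βhat : Fin r → ℝ)
    (hmin : ∀ β : Fin r → ℝ,
      (1 / 2) * vnorm (X.mulVec βhat - y) ^ 2 + lam * vnorm1 (Z.mulVec βhat) ≤
        (1 / 2) * vnorm (X.mulVec β - y) ^ 2 + lam * vnorm1 (Z.mulVec β))
    (h : Fin r → ℝ) (hh : h = βhat - βstar)
    (T₀ : Finset (Fin m)) (hT₀ : T₀ = suppSet (Z.mulVec βstar))
    (s : ℕ) (hs : s = T₀.card) (hs1 : 1 ≤ s)
    (hfeas : vnormInf (Zpᵀ.mulVec (Xᵀ.mulVec (X.mulVec βstar - y))) < lam / 2)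
    -- the block partition of `T₀ᶜ` into `T 1, …, T J`
    (l : ℕ) (hl : 0 < l) (J : ℕ) (hJ : 1 ≤ J) (T : ℕ → Finset (Fin m))
    (hUnion : (Finset.Icc 1 J).biUnion T = T₀ᶜ)
    (hDisj : ∀ i ∈ Finset.Icc 1 J, ∀ j ∈ Finset.Icc 1 J, i ≠ j → Disjoint (T i) (T j))
    (hCard : ∀ j, 1 ≤ j → j < J → (T j).card = l)
    (hCardLast : (T J).card ≤ l)
    (hOrder : ∀ j, 2 ≤ j → j ≤ J → ∀ a ∈ T j, ∀ b ∈ T (j - 1),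
      |Z.mulVec h a| ≤ |Z.mulVec h b|)
    (T01 : Finset (Fin m)) (hT01 : T01 = T₀ ∪ T 1) :
    vnorm (X.mulVec h) ^ 2 ≤
      6 * Real.sqrt (s : ℝ) * lam * vnorm (restr T01 (Z.mulVec h)) := by
  classical
  set c : Fin n → ℝ := X.mulVec βstar - y with hc
  set w : Fin m → ℝ := Z.mulVec h with hw
  set wstar : Fin m → ℝ := Z.mulVec βstar with hwstar
  -- `Zp * Z = 1`
  have hrk : (Zᵀ * Z).rank = r := by rw [Matrix.rank_transpose_mul_self, hZrank]
  have hker : LinearMap.ker (Zᵀ * Z).mulVecLin = ⊥ := by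
    have h1 := LinearMap.finrank_range_add_finrank_ker (Zᵀ * Z).mulVecLin
    have h2 : Module.finrank ℝ (Fin r → ℝ) = r := by simp
    have h3 : Module.finrank ℝ (LinearMap.range (Zᵀ * Z).mulVecLin) = r := by
      unfold Matrix.rank at hrk; exact hrk
    have h4 : Module.finrank ℝ (LinearMap.ker (Zᵀ * Z).mulVecLin) = 0 := by omega
    exact Submodule.finrank_eq_zero.mp h4
  have hinj : Function.Injective ((Zᵀ * Z).mulVec) := by
    have h5 := LinearMap.ker_eq_bot.mp hker
    intro a b hab
    have h6 : (Zᵀ * Z).mulVecLin a = (Zᵀ * Z).mulVecLin b := by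
      rw [Matrix.mulVecLin_apply, Matrix.mulVecLin_apply]; exact hab
    exact h5 h6
  have hU : IsUnit (Zᵀ * Z) := Matrix.mulVec_injective_iff_isUnit.mp hinj
  have hZpZ : Zp * Z = 1 := by
    rw [hZp, Matrix.mul_assoc]
    exact Matrix.nonsing_inv_mul _ ((Matrix.isUnit_iff_isUnit_det _).mp hU)
  have hhw : h = Zp.mulVec w := by
    rw [hw, Matrix.mulVec_mulVec, hZpZ, Matrix.one_mulVec]
  -- rewrite the inner product
  set g : Fin m → ℝ := Zpᵀ.mulVec (Xᵀ.mulVec c) with hg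
  have hdot : dotProduct (X.mulVec h) c = dotProduct g w := by
    calc dotProduct (X.mulVec h) c = dotProduct c (X.mulVec h) :=
          dotProduct_comm _ _
      _ = dotProduct (Matrix.vecMul c X) h := Matrix.dotProduct_mulVec _ _ _
      _ = dotProduct (Xᵀ.mulVec c) h := by rw [Matrix.mulVec_transpose]
      _ = dotProduct (Xᵀ.mulVec c) (Zp.mulVec w) := by rw [← hhw]
      _ = dotProduct (Matrix.vecMul (Xᵀ.mulVec c) Zp) w :=
          Matrix.dotProduct_mulVec _ _ _
      _ = dotProduct g w := by rw [hg]; simp [Matrix.mulVec_transpose]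
  -- entrywise bound on g
  have hgbd : ∀ j, |g j| ≤ lam / 2 := by
    intro j
    have h1 : |g j| ≤ vnormInf g := by
      apply le_ciSup (f := fun i => |g i|)
      exact (Set.finite_range _).bddAbove
    exact h1.trans (le_of_lt hfeas)
  have hdotbd : |dotProduct g w| ≤ (lam / 2) * ∑ j, |w j| := by
    calc |dotProduct g w| ≤ ∑ j, |g j * w j| := Finset.abs_sum_le_sum_abs _ _
      _ ≤ ∑ j, (lam / 2) * |w j| := by
          apply Finset.sum_le_sum
          intro j _
          rw [abs_mul]
          exact mul_le_mul_of_nonneg_right (hgbd j) (abs_nonneg _)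
      _ = (lam / 2) * ∑ j, |w j| := by rw [Finset.mul_sum]
  -- square norms are sums of squares
  have hsq : ∀ v : Fin n → ℝ, vnorm v ^ 2 = ∑ i, v i ^ 2 := fun v =>
    Real.sq_sqrt (Finset.sum_nonneg fun i _ => sq_nonneg _)
  -- expansion of the quadratic
  have hpt : ∀ i, (X.mulVec βhat - y) i = X.mulVec h i + c i := by
    intro i
    rw [hh, Matrix.mulVec_sub]
    simp only [hc, Pi.sub_apply]
    ring
  have hE : ∑ i, (X.mulVec βhat - y) i ^ 2 =
      ∑ i, X.mulVec h i ^ 2 + 2 * dotProduct (X.mulVec h) c + ∑ i, c i ^ 2 := by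
    rw [Finset.sum_congr rfl fun i _ => congrArg (· ^ 2) (hpt i)]
    have : ∀ i : Fin n, (X.mulVec h i + c i) ^ 2 =
        X.mulVec h i ^ 2 + 2 * (X.mulVec h i * c i) + c i ^ 2 := fun i => by ring
    rw [Finset.sum_congr rfl fun i _ => this i, Finset.sum_add_distrib,
      Finset.sum_add_distrib, ← Finset.mul_sum]
    rfl
  -- basic inequality
  have hB := hmin βstar
  rw [hsq, hsq, hE] at hB
  -- ℓ¹ splitting
  have hZβhat : Z.mulVec βhat = fun i => wstar i + w i := by
    funext i
    have hb : βhat = βstar + h := by rw [hh]; abel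
    rw [hb, Matrix.mulVec_add]
    rfl
  have hstar0 : ∀ i ∈ T₀ᶜ, wstar i = 0 := by
    intro i hi
    rw [Finset.mem_compl, hT₀, suppSet, Finset.mem_filter] at hi
    push_neg at hi
    simpa [hwstar] using hi (Finset.mem_univ i)
  set A : ℝ := ∑ i ∈ T₀, |w i| with hA
  set B : ℝ := ∑ i ∈ T₀ᶜ, |w i| with hB'
  have hAnn : 0 ≤ A := Finset.sum_nonneg fun i _ => abs_nonneg _
  have hBnn : 0 ≤ B := Finset.sum_nonneg fun i _ => abs_nonneg _
  have hC : vnorm1 wstar - vnorm1 (Z.mulVec βhat) ≤ A - B := by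
    rw [hZβhat]
    have e1 : vnorm1 wstar = ∑ i ∈ T₀, |wstar i| := by
      rw [vnorm1, ← Finset.sum_add_sum_compl T₀]
      have : ∑ i ∈ T₀ᶜ, |wstar i| = 0 :=
        Finset.sum_eq_zero fun i hi => by rw [hstar0 i hi, abs_zero]
      rw [this, add_zero]
    have e2 : vnorm1 (fun i => wstar i + w i) =
        ∑ i ∈ T₀, |wstar i + w i| + ∑ i ∈ T₀ᶜ, |w i| := by
      rw [vnorm1, ← Finset.sum_add_sum_compl T₀]
      congr 1
      exact Finset.sum_congr rfl fun i hi => by rw [hstar0 i hi, zero_add]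
    have e3 : ∑ i ∈ T₀, |wstar i| ≤ ∑ i ∈ T₀, |wstar i + w i| + A := by
      rw [hA, ← Finset.sum_add_distrib]
      apply Finset.sum_le_sum
      intro i _
      calc |wstar i| = |(wstar i + w i) - w i| := by ring_nf
        _ ≤ |wstar i + w i| + |w i| := abs_sub _ _
    rw [e1, e2]
    linarith
  -- combine
  have hsum1 : ∑ j, |w j| = A + B := by rw [hA, hB', Finset.sum_add_sum_compl]
  have habs : -dotProduct (X.mulVec h) c ≤ (lam / 2) * (A + B) := by
    rw [hdot]
    calc -dotProduct g w ≤ |dotProduct g w| := neg_le_abs _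
      _ ≤ (lam / 2) * ∑ j, |w j| := hdotbd
      _ = (lam / 2) * (A + B) := by rw [hsum1]
  have hCineq := hC
  have hXh : ∑ i, X.mulVec h i ^ 2 ≤ 3 * lam * A := by nlinarith [hB, habs, hCineq]
  -- Cauchy–Schwarz
  set R : ℝ := vnorm (restr T01 w) with hR
  have hRnn : 0 ≤ R := Real.sqrt_nonneg _
  have hRsq : R ^ 2 = ∑ i ∈ T01, w i ^ 2 := by
    rw [hR, vnorm, Real.sq_sqrt (Finset.sum_nonneg fun i _ => sq_nonneg _)]
    rw [show ∑ i, restr T01 w i ^ 2 = ∑ i, if i ∈ T01 then w i ^ 2 else 0 from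
      Finset.sum_congr rfl fun i _ => by by_cases hi : i ∈ T01 <;> simp [restr, hi]]
    simp [Finset.sum_ite_mem]
  have hQle : ∑ i ∈ T₀, w i ^ 2 ≤ ∑ i ∈ T01, w i ^ 2 := by
    apply Finset.sum_le_sum_of_subset_of_nonneg
    · rw [hT01]; exact Finset.subset_union_left
    · intro i _ _; exact sq_nonneg _
  have hCS : A ^ 2 ≤ (s : ℝ) * R ^ 2 := by
    have h1 := Finset.sum_mul_sq_le_sq_mul_sq T₀ (fun _ => (1 : ℝ)) (fun i => |w i|)
    simp only [one_mul, one_pow, Finset.sum_const, nsmul_eq_mul, mul_one, sq_abs] at h1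
    rw [hRsq, hs]
    calc A ^ 2 ≤ (T₀.card : ℝ) * ∑ i ∈ T₀, w i ^ 2 := h1
      _ ≤ (T₀.card : ℝ) * ∑ i ∈ T01, w i ^ 2 := by
          exact mul_le_mul_of_nonneg_left hQle (Nat.cast_nonneg _)
  have hAle : A ≤ Real.sqrt (s : ℝ) * R := by
    have h2 : Real.sqrt (A ^ 2) ≤ Real.sqrt ((s : ℝ) * R ^ 2) := Real.sqrt_le_sqrt hCS
    rw [Real.sqrt_sq hAnn, Real.sqrt_mul (Nat.cast_nonneg _), Real.sqrt_sq hRnn] at h2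
    exact h2
  -- conclude
  have hfin : vnorm (X.mulVec h) ^ 2 = ∑ i, X.mulVec h i ^ 2 := hsq _
  have hsR : 0 ≤ Real.sqrt (s : ℝ) * R := mul_nonneg (Real.sqrt_nonneg _) hRnn
  have : 3 * lam * A ≤ 3 * lam * (Real.sqrt (s : ℝ) * R) :=
    mul_le_mul_of_nonneg_left hAle (by linarith)
  rw [hfin]
  nlinarith [mul_nonneg (le_of_lt hlam) hsR]
end
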